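/- Let M ⊂ ℝⁿ be measurable with 0 < μ(M) < ∞, let 0 < p < q < ∞, 0 < b ≤ c ≤ ∞, and A, B pairs of reals. Then every f ∈ L_{q,c;B}(M) belongs to L_{p,b;A}(M) and ‖f‖_{p,b;A} ≤ C μ(M)^{1/p - 1/q} ℓ^{A-B}(μ(M)) ‖f‖_{q,c;B}, with C independent of f and M. -/

import Mathlib

/-!
Put `δ = 1/p - 1/q > 0` and choose `r` with `1/b = 1/r + 1/c`. Hölder's inequality on
`(0, m)`, `m = μ(M)`, bounds `‖f‖_{p,b;A}` by `‖t^{δ-1/r} ℓ^{A-B}(t)‖_{L_r(0,m)} ‖f‖_{q,c;B}`.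
For every `ε > 0` the function `t^ε ℓ^D(t)` is almost increasing, since a power beats any power
of a logarithm and `1 + |log t|` is submultiplicative. Writing `t^δ = t^{δ/2} t^{δ/2}`, the
weight is therefore at most `C m^{δ/2} ℓ^{A-B}(m) t^{δ/2-1/r}`, and the pure power has
`L_r(0,m)` norm `≍ m^{δ/2}`.
-/

open MeasureTheory ENNReal Set
open scoped FourierTransform

/-- Broken logarithm `ℓ^A(t)`. -/
noncomputable def brokenLog (A : ℝ × ℝ) (t : ℝ) : ℝ :=
  if t ≤ 1 then (1 + |Real.log t|) ^ A.1 else (1 + |Real.log t|) ^ A.2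

/-- Non-increasing rearrangement of `f` with respect to `μ`. -/
noncomputable def rearr {α : Type*} [MeasurableSpace α] (μ : Measure α) (f : α → ℂ) (t : ℝ) : ℝ :=
  sInf {s : ℝ | 0 ≤ s ∧ μ {x | s < ‖f x‖} ≤ ENNReal.ofReal t}

/-- Lorentz–Zygmund quasi-norm `‖f‖_{p,b;A}` over `(0, len)`, computed from a
rearrangement `g = f*`.  The case `b = ∞` is the usual essential-supremum modification. -/
noncomputable def lzNorm (p b : ℝ≥0∞) (A : ℝ × ℝ) (len : ℝ≥0∞) (g : ℝ → ℝ) : ℝ≥0∞ :=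
  eLpNorm (fun t : ℝ => t ^ (p.toReal⁻¹ - b.toReal⁻¹) * brokenLog A t * g t) b
    (volume.restrict {t : ℝ | 0 < t ∧ ENNReal.ofReal t < len})

lemma brokenLog_pos (A : ℝ × ℝ) (t : ℝ) : 0 < brokenLog A t := by
  unfold brokenLog; split_ifs <;> positivity

lemma brokenLog_mul (A B : ℝ × ℝ) (t : ℝ) :
    brokenLog (A.1 - B.1, A.2 - B.2) t * brokenLog B t = brokenLog A t := by
  unfold brokenLog
  split_ifs <;> rw [← Real.rpow_add (by positivity)] <;> ring_nf

@[fun_prop]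
lemma measurable_brokenLog (A : ℝ × ℝ) : Measurable (brokenLog A) := by
  unfold brokenLog
  exact Measurable.ite (measurableSet_le measurable_id measurable_const) (by fun_prop) (by fun_prop)

lemma one_add_abs_le_mul_one_add_abs_sub (u v : ℝ) : 1 + |u| ≤ (1 + |v|) * (1 + |u - v|) := by
  have := abs_sub_abs_le_abs_sub u v
  nlinarith [abs_nonneg v, abs_nonneg (u - v)]

lemma one_add_abs_log_rpow_le (β : ℝ) {x y : ℝ} (hx : 0 < x) (hy : 0 < y) :
    (1 + |Real.log x|) ^ β ≤ (1 + |Real.log y|) ^ β * (1 + |Real.log (x / y)|) ^ |β| := by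
  set a := 1 + |Real.log x|
  set b := 1 + |Real.log y|
  set c := 1 + |Real.log (x / y)| with hc
  rw [Real.log_div hx.ne' hy.ne'] at hc
  have ha : 0 < a := by positivity
  have hb : 0 < b := by positivity
  have hc0 : 0 < c := by positivity
  have hac : a ≤ c * b := by
    rw [hc, mul_comm]; exact one_add_abs_le_mul_one_add_abs_sub _ _
  have hbc : b ≤ c * a := by
    rw [hc, abs_sub_comm, mul_comm]; exact one_add_abs_le_mul_one_add_abs_sub _ _
  have hlog : |Real.log a - Real.log b| ≤ Real.log c := by
    rw [abs_sub_le_iff, sub_le_iff_le_add, sub_le_iff_le_add, ← Real.log_mul hc0.ne' hb.ne',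
      ← Real.log_mul hc0.ne' ha.ne']
    exact ⟨Real.log_le_log ha hac, Real.log_le_log hb hbc⟩
  rw [Real.rpow_def_of_pos ha, Real.rpow_def_of_pos hb, Real.rpow_def_of_pos hc0,
    ← Real.exp_add, Real.exp_le_exp]
  have := abs_mul β (Real.log a - Real.log b)
  nlinarith [le_abs_self (β * (Real.log a - Real.log b)), abs_nonneg β]

lemma exists_rpow_mul_one_add_abs_log_rpow_le {δ β : ℝ} (hδ : 0 < δ) (hβ : 0 ≤ β) :
    ∃ K > 0, ∀ u ∈ Ioc (0 : ℝ) 1, u ^ δ * (1 + |Real.log u|) ^ β ≤ K := by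
  set ε := δ / (β + 1)
  have hε : 0 < ε := by positivity
  refine ⟨(1 + ε⁻¹) ^ (β + 1), by positivity, fun u ⟨hu, hu1⟩ => ?_⟩
  have hinv : 1 ≤ u⁻¹ ^ ε := Real.one_le_rpow ((one_le_inv₀ hu).2 hu1) hε.le
  have hL : 1 + |Real.log u| ≤ (1 + ε⁻¹) * u⁻¹ ^ ε := by
    rw [abs_of_nonpos (Real.log_nonpos hu.le hu1), ← Real.log_inv]
    have := Real.log_le_rpow_div (inv_nonneg.2 hu.le) hε
    rw [div_eq_inv_mul] at this
    nlinarith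
  calc u ^ δ * (1 + |Real.log u|) ^ β
      ≤ u ^ δ * ((1 + ε⁻¹) * u⁻¹ ^ ε) ^ (β + 1) := by
        gcongr
        calc (1 + |Real.log u|) ^ β ≤ (1 + |Real.log u|) ^ (β + 1) :=
              Real.rpow_le_rpow_of_exponent_le (by linarith [abs_nonneg (Real.log u)]) (by linarith)
          _ ≤ _ := by gcongr
    _ = (1 + ε⁻¹) ^ (β + 1) := by
        rw [Real.mul_rpow (by positivity) (by positivity), ← Real.rpow_mul (by positivity),
          div_mul_cancel₀ _ (by positivity), Real.inv_rpow hu.le, mul_left_comm,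
          mul_inv_cancel₀ (by positivity), mul_one]

lemma exists_rpow_mul_one_add_abs_log_rpow_le_mul {δ : ℝ} (hδ : 0 < δ) (γ : ℝ) :
    ∃ K > 0, ∀ t m : ℝ, 0 < t → t ≤ m →
      t ^ δ * (1 + |Real.log t|) ^ γ ≤ K * (m ^ δ * (1 + |Real.log m|) ^ γ) := by
  obtain ⟨K, hK, hKb⟩ := exists_rpow_mul_one_add_abs_log_rpow_le hδ (abs_nonneg γ)
  refine ⟨K, hK, fun t m ht htm => ?_⟩
  have hm := ht.trans_le htm
  have hu : t / m ∈ Ioc 0 1 := ⟨div_pos ht hm, div_le_one_of_le₀ htm hm.le⟩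
  calc t ^ δ * (1 + |Real.log t|) ^ γ
      ≤ t ^ δ * ((1 + |Real.log m|) ^ γ * (1 + |Real.log (t / m)|) ^ |γ|) := by
        gcongr; exact one_add_abs_log_rpow_le γ ht hm
    _ = (m ^ δ * (1 + |Real.log m|) ^ γ) * ((t / m) ^ δ * (1 + |Real.log (t / m)|) ^ |γ|) := by
        rw [Real.div_rpow ht.le hm.le]
        field_simp
    _ ≤ (m ^ δ * (1 + |Real.log m|) ^ γ) * K := by gcongr; exact hKb _ hu
    _ = K * (m ^ δ * (1 + |Real.log m|) ^ γ) := mul_comm _ _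

lemma brokenLog_eq_mul (A : ℝ × ℝ) (t : ℝ) :
    brokenLog A t = (1 + |Real.log (min t 1)|) ^ A.1 * (1 + |Real.log (max t 1)|) ^ A.2 := by
  unfold brokenLog
  split_ifs with ht
  · simp [ht]
  · simp [(not_le.1 ht).le]

lemma exists_rpow_mul_brokenLog_le_mul {δ : ℝ} (hδ : 0 < δ) (A : ℝ × ℝ) :
    ∃ K > 0, ∀ t m : ℝ, 0 < t → t ≤ m →
      t ^ δ * brokenLog A t ≤ K * (m ^ δ * brokenLog A m) := by
  obtain ⟨K₁, hK₁, h₁⟩ := exists_rpow_mul_one_add_abs_log_rpow_le_mul hδ A.1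
  obtain ⟨K₂, hK₂, h₂⟩ := exists_rpow_mul_one_add_abs_log_rpow_le_mul hδ A.2
  -- `t = min t 1 * max t 1` splits `t ^ δ * ℓ^A(t)` into two factors, each of which is
  -- of the form `s ^ δ * (1 + |log s|) ^ γ` evaluated at a monotone function of `t`.
  have hsplit : ∀ t > (0 : ℝ), t ^ δ * brokenLog A t =
      ((min t 1) ^ δ * (1 + |Real.log (min t 1)|) ^ A.1) *
        ((max t 1) ^ δ * (1 + |Real.log (max t 1)|) ^ A.2) := fun t ht => by
    have hpow : t ^ δ = (min t 1) ^ δ * (max t 1) ^ δ := by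
      rw [← Real.mul_rpow (by positivity) (by positivity), min_mul_max, mul_one]
    rw [brokenLog_eq_mul, hpow]
    ring
  refine ⟨K₁ * K₂, by positivity, fun t m ht htm => ?_⟩
  have hm := ht.trans_le htm
  rw [hsplit t ht, hsplit m hm]
  calc _ ≤ (K₁ * ((min m 1) ^ δ * (1 + |Real.log (min m 1)|) ^ A.1)) *
        (K₂ * ((max m 1) ^ δ * (1 + |Real.log (max m 1)|) ^ A.2)) := by
        refine mul_le_mul (h₁ _ _ (lt_min ht one_pos) (min_le_min_right 1 htm))
          (h₂ _ _ (by positivity) (max_le_max_right 1 htm)) (by positivity) (by positivity)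
    _ = _ := by ring

lemma lintegral_Ioo_ofReal_rpow_sub_one {s m : ℝ} (hs : 0 < s) (hm : 0 < m) :
    ∫⁻ t in Ioo 0 m, ENNReal.ofReal (t ^ (s - 1)) = ENNReal.ofReal (m ^ s / s) := by
  rw [← ofReal_integral_eq_lintegral_ofReal]
  · rw [← integral_Ioc_eq_integral_Ioo, ← intervalIntegral.integral_of_le hm.le,
      integral_rpow (Or.inl (by linarith)), sub_add_cancel, Real.zero_rpow hs.ne', sub_zero]
  · exact (intervalIntegral.integrableOn_Ioo_rpow_iff hm).2 (by linarith)
  · filter_upwards [ae_restrict_mem measurableSet_Ioo] with t ht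
    exact Real.rpow_nonneg ht.1.le _

lemma exists_eLpNorm_rpow_Ioo_le {ε : ℝ} (hε : 0 < ε) (r : ℝ≥0∞) :
    ∃ C > 0, ∀ m > 0, eLpNorm (fun t : ℝ => t ^ (ε - r.toReal⁻¹)) r
      (volume.restrict (Ioo 0 m)) ≤ ENNReal.ofReal (C * m ^ ε) := by
  rcases eq_or_ne r 0 with rfl | hr0
  · exact ⟨1, one_pos, fun m _ => by simp⟩
  rcases eq_or_ne r ⊤ with rfl | hrtop
  · refine ⟨1, one_pos, fun m _ => ?_⟩
    rw [eLpNorm_exponent_top, one_mul]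
    refine eLpNormEssSup_le_of_ae_bound ?_
    filter_upwards [ae_restrict_mem measurableSet_Ioo] with t ht
    simp only [toReal_top, _root_.inv_zero, sub_zero]
    rw [Real.norm_of_nonneg (by positivity [ht.1])]
    exact Real.rpow_le_rpow ht.1.le ht.2.le hε.le
  set r' := r.toReal
  have hr' : 0 < r' := toReal_pos hr0 hrtop
  refine ⟨(ε * r')⁻¹ ^ r'⁻¹, by positivity, fun m hm => le_of_eq ?_⟩
  have hpow : ∀ t ∈ Ioo (0 : ℝ) m,
      ‖t ^ (ε - r'⁻¹)‖ₑ ^ r' = ENNReal.ofReal (t ^ (ε * r' - 1)) := fun t ht => by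
    rw [Real.enorm_eq_ofReal (by positivity [ht.1]), ofReal_rpow_of_nonneg (by positivity [ht.1])
      hr'.le, ← Real.rpow_mul ht.1.le, sub_mul, inv_mul_cancel₀ hr'.ne']
  rw [eLpNorm_eq_lintegral_rpow_enorm_toReal hr0 hrtop,
    setLIntegral_congr_fun measurableSet_Ioo hpow,
    lintegral_Ioo_ofReal_rpow_sub_one (by positivity) hm,
    ofReal_rpow_of_nonneg (by positivity) (by positivity), div_eq_inv_mul,
    Real.mul_rpow (by positivity) (by positivity), ← Real.rpow_mul hm.le, one_div,
    mul_inv_cancel_right₀ hr'.ne']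

lemma exists_eLpNorm_rpow_mul_brokenLog_Ioo_le {δ : ℝ} (hδ : 0 < δ) (r : ℝ≥0∞) (A : ℝ × ℝ) :
    ∃ C > 0, ∀ m > 0, eLpNorm (fun t : ℝ => t ^ (δ - r.toReal⁻¹) * brokenLog A t) r
      (volume.restrict (Ioo 0 m)) ≤ ENNReal.ofReal (C * m ^ δ * brokenLog A m) := by
  obtain ⟨K, hK, hKb⟩ := exists_rpow_mul_brokenLog_le_mul (half_pos hδ) A
  obtain ⟨C, hC, hCb⟩ := exists_eLpNorm_rpow_Ioo_le (half_pos hδ) r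
  refine ⟨K * C, by positivity, fun m hm => ?_⟩
  have hle : ∀ᵐ t ∂volume.restrict (Ioo 0 m), ‖t ^ (δ - r.toReal⁻¹) * brokenLog A t‖ ≤
      K * (m ^ (δ / 2) * brokenLog A m) * ‖t ^ (δ / 2 - r.toReal⁻¹)‖ := by
    filter_upwards [ae_restrict_mem measurableSet_Ioo] with t ht
    have hlog := brokenLog_pos A t
    rw [Real.norm_of_nonneg (by positivity [ht.1]), Real.norm_of_nonneg (by positivity [ht.1]),
      show δ - r.toReal⁻¹ = δ / 2 + (δ / 2 - r.toReal⁻¹) by ring, Real.rpow_add ht.1]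
    calc _ = t ^ (δ / 2) * brokenLog A t * t ^ (δ / 2 - r.toReal⁻¹) := by ring
      _ ≤ _ := mul_le_mul_of_nonneg_right (hKb t m ht.1 ht.2.le) (by positivity [ht.1])
  calc _ ≤ ENNReal.ofReal (K * (m ^ (δ / 2) * brokenLog A m)) *
        eLpNorm (fun t : ℝ => t ^ (δ / 2 - r.toReal⁻¹)) r (volume.restrict (Ioo 0 m)) :=
        eLpNorm_le_mul_eLpNorm_of_ae_le_mul hle r
    _ ≤ ENNReal.ofReal (K * (m ^ (δ / 2) * brokenLog A m)) *
          ENNReal.ofReal (C * m ^ (δ / 2)) := by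
        gcongr; exact hCb m hm
    _ = ENNReal.ofReal (K * C * m ^ δ * brokenLog A m) := by
        rw [← ofReal_mul (by positivity [brokenLog_pos A m])]
        congr 1
        have hsq : m ^ δ = m ^ (δ / 2) * m ^ (δ / 2) := by rw [← Real.rpow_add hm, add_halves]
        rw [hsq]
        ring

lemma ordConnected_setOf_lt_rearr {α : Type*} [MeasurableSpace α] (μ : Measure α) (f : α → ℂ)
    (a : ℝ) : {t | a < rearr μ f t}.OrdConnected := by
  set E : ℝ → Set ℝ := fun t => {s : ℝ | 0 ≤ s ∧ μ {x | s < ‖f x‖} ≤ ENNReal.ofReal t}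
  have hE : Monotone E := fun t t' htt' s hs => ⟨hs.1, hs.2.trans (ofReal_le_ofReal htt')⟩
  refine ⟨fun t₁ ht₁ t₂ ht₂ t ⟨h₁t, ht₂'⟩ => ?_⟩
  -- `rearr` is antitone where the defining set is nonempty and takes the junk value `0` elsewhere.
  rcases (E t).eq_empty_or_nonempty with hempty | hne
  · have hempty₁ : E t₁ = ∅ := subset_eq_empty (hE h₁t) hempty
    change a < sInf (E t)
    rw [hempty]
    simpa [rearr, E, hempty₁] using ht₁
  · exact ht₂.trans_le (csInf_le_csInf ⟨0, fun s hs => hs.1⟩ hne (hE ht₂'))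

lemma measurable_rearr {α : Type*} [MeasurableSpace α] (μ : Measure α) (f : α → ℂ) :
    Measurable (rearr μ f) :=
  measurable_of_Ioi fun a => (ordConnected_setOf_lt_rearr μ f a).measurableSet

lemma ENNReal.HolderTriple.toReal_inv_add_toReal_inv {p q r : ℝ≥0∞} [HolderTriple p q r]
    (hr : r ≠ 0) : p.toReal⁻¹ + q.toReal⁻¹ = r.toReal⁻¹ := by
  have hfin : r⁻¹ ≠ ⊤ := inv_ne_top.2 hr
  have hsum := HolderTriple.inv_add_inv_eq_inv p q r
  rw [← toReal_inv, ← toReal_inv, ← toReal_inv, ← hsum,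
    toReal_add (ne_top_of_le_ne_top hfin (HolderTriple.inv_le_inv p q r))
      (ne_top_of_le_ne_top hfin (HolderTriple.inv_le_inv q p r))]

lemma ENNReal.holderTriple_inv_sub_inv {b c : ℝ≥0∞} (hbc : b ≤ c) :
    HolderTriple (b⁻¹ - c⁻¹)⁻¹ c b :=
  ⟨by rw [inv_inv, tsub_add_cancel_of_le (ENNReal.inv_le_inv' hbc)]⟩

lemma lzNorm_le_eLpNorm_mul_lzNorm (p q : ℝ≥0∞) {b c r : ℝ≥0∞} [HolderTriple r c b] (hb : b ≠ 0)
    (A B : ℝ × ℝ) (len : ℝ≥0∞) {g : ℝ → ℝ} (hg : Measurable g) :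
    lzNorm p b A len g ≤
      eLpNorm (fun t : ℝ => t ^ (p.toReal⁻¹ - q.toReal⁻¹ - r.toReal⁻¹) *
          brokenLog (A.1 - B.1, A.2 - B.2) t) r
        (volume.restrict {t : ℝ | 0 < t ∧ ENNReal.ofReal t < len}) *
      lzNorm q c B len g := by
  have hexp := HolderTriple.toReal_inv_add_toReal_inv (p := r) (q := c) hb
  unfold lzNorm
  refine le_of_eq_of_le (eLpNorm_congr_ae ?_)
    (eLpNorm_smul_le_mul_eLpNorm (by fun_prop) (by fun_prop))
  refine ae_restrict_of_ae_restrict_of_subset (fun t ht => ht.1) ?_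
  filter_upwards [ae_restrict_mem measurableSet_Ioi] with t ht
  simp only [smul_eq_mul, Pi.mul_apply]
  rw [← brokenLog_mul A B t, show p.toReal⁻¹ - b.toReal⁻¹ =
    (p.toReal⁻¹ - q.toReal⁻¹ - r.toReal⁻¹) + (q.toReal⁻¹ - c.toReal⁻¹) by rw [← hexp]; ring,
    Real.rpow_add ht]
  ring

lemma setOf_pos_ofReal_lt_eq_Ioo {len : ℝ≥0∞} (hlen : len ≠ ⊤) :
    {t : ℝ | 0 < t ∧ ENNReal.ofReal t < len} = Ioo 0 len.toReal := by
  ext t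
  simp only [mem_ofPred_eq, mem_Ioo, and_congr_right_iff]
  exact fun ht => ofReal_lt_iff_lt_toReal ht.le hlen

/-- Lemma 2, case `b ≤ c`: embedding `L_{q,c;B}(M) ⊂ L_{p,b;A}(M)` with norm
`≲ μ(M)^{1/p-1/q} ℓ^{A-B}(μ(M))`, constant independent of `f` and `M`. -/
theorem stmt_3 (n : ℕ) (p q : ℝ) (hp : 0 < p) (hpq : p < q)
    (b c : ℝ≥0∞) (hb : 0 < b) (hbc : b ≤ c) (A B : ℝ × ℝ) :
    ∃ C : ℝ, 0 < C ∧ ∀ (M : Set (Fin n → ℝ)), MeasurableSet M →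
      0 < volume M → volume M < ⊤ → ∀ f : (Fin n → ℝ) → ℂ,
      lzNorm (ENNReal.ofReal q) c B (volume M) (rearr (volume.restrict M) f) < ⊤ →
      lzNorm (ENNReal.ofReal p) b A (volume M) (rearr (volume.restrict M) f) < ⊤ ∧
      lzNorm (ENNReal.ofReal p) b A (volume M) (rearr (volume.restrict M) f) ≤
        ENNReal.ofReal (C * (volume M).toReal ^ (p⁻¹ - q⁻¹) *
            brokenLog (A.1 - B.1, A.2 - B.2) (volume M).toReal) *
          lzNorm (ENNReal.ofReal q) c B (volume M) (rearr (volume.restrict M) f) := by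
  have hδ : 0 < p⁻¹ - q⁻¹ := sub_pos.2 (inv_strictAnti₀ hp hpq)
  set r := (b⁻¹ - c⁻¹)⁻¹
  have : HolderTriple r c b := holderTriple_inv_sub_inv hbc
  obtain ⟨C, hC, hweight⟩ := exists_eLpNorm_rpow_mul_brokenLog_Ioo_le hδ r (A.1 - B.1, A.2 - B.2)
  refine ⟨C, hC, fun M _ hM0 hMtop f hfin => ?_⟩
  have hHolder := lzNorm_le_eLpNorm_mul_lzNorm (ENNReal.ofReal p) (ENNReal.ofReal q)
    (c := c) (r := r) hb.ne' A B (volume M) (measurable_rearr (volume.restrict M) f)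
  rw [setOf_pos_ofReal_lt_eq_Ioo hMtop.ne, toReal_ofReal hp.le,
    toReal_ofReal (hp.trans hpq).le] at hHolder
  have hbound := hHolder.trans (mul_le_mul_left (hweight _ (toReal_pos hM0.ne' hMtop.ne)) _)
  exact ⟨hbound.trans_lt (mul_lt_top ofReal_lt_top hfin), hbound⟩
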